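/- For every r ≥ 0, all î, ĵ ∈ {3, …, n+2} and all c, d, f_1, …, f_r ∈ {1, …, n+4}, the covariant-derivative components of the curvature tensor of the metric G satisfy R^î_{ĵ, c, d; f_1; …; f_r; 1} = 0 and R^î_{ĵ, c, d; f_1; …; f_r; 2} = 0 identically on ℝ^{n+4}. -/

import Mathlib

namespace HolPaper

open Matrix

/-- Points of `ℝ^{n+4}`, with coordinates indexed by `Fin (n+4)`.
The paper's index `1` is `p1`, `2` is `p2`, `î ∈ {3,…,n+2}` is `ehat i` for `i : Fin n`,
`n+3` is `q1` and `n+4` is `q2`. -/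
abbrev Pt (n : ℕ) := Fin (n + 4) → ℝ

def p1 (n : ℕ) : Fin (n + 4) := ⟨0, by omega⟩
def p2 (n : ℕ) : Fin (n + 4) := ⟨1, by omega⟩
def ehat {n : ℕ} (i : Fin n) : Fin (n + 4) := ⟨i.1 + 2, by have := i.isLt; omega⟩
def q1 (n : ℕ) : Fin (n + 4) := ⟨n + 2, by omega⟩
def q2 (n : ℕ) : Fin (n + 4) := ⟨n + 3, by omega⟩

noncomputable section

variable {n N : ℕ}

/-- `u^î(x) = Σ_ĵ Σ_α (A_α)_{î-2,ĵ-2} x^ĵ (x^{n+3})^α`. -/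
def u (A : Fin N → Matrix (Fin n) (Fin n) ℝ) (i : Fin n) (x : Pt n) : ℝ :=
  ∑ j : Fin n, ∑ α : Fin N, A α i j * x (ehat j) * x (q1 n) ^ (α.1 + 1)

/-- `F(x) = Σ_î (x^î)²`. -/
def Fq (n : ℕ) (x : Pt n) : ℝ := ∑ i : Fin n, x (ehat i) ^ 2

/-- The Gram matrix `G(x)` of the metric. -/
def Gmet (A : Fin N → Matrix (Fin n) (Fin n) ℝ) (x : Pt n) :
    Matrix (Fin (n + 4)) (Fin (n + 4)) ℝ := fun a b =>
  (if (a = p1 n ∧ b = q1 n) ∨ (a = q1 n ∧ b = p1 n) then (1 : ℝ) else 0)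
  + (if (a = p2 n ∧ b = q2 n) ∨ (a = q2 n ∧ b = p2 n) then (1 : ℝ) else 0)
  + (∑ i : Fin n, if a = ehat i ∧ b = ehat i then (1 : ℝ) else 0)
  + (∑ i : Fin n, if (a = ehat i ∧ b = q2 n) ∨ (a = q2 n ∧ b = ehat i) then u A i x else 0)
  + (if (a = q1 n ∧ b = q1 n) ∨ (a = q2 n ∧ b = q2 n) then Fq n x else 0)

/-- Partial derivative `∂_b f` of a function on `ℝ^{n+4}`. -/
def pd (b : Fin (n + 4)) (f : Pt n → ℝ) (x : Pt n) : ℝ :=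
  fderiv ℝ f x (Pi.single b 1)

/-- Christoffel symbols
`Γ^a_{bc} = ½ Σ_d G^{ad} (∂_b G_{dc} + ∂_c G_{bd} − ∂_d G_{bc})`. -/
def Γchr (A : Fin N → Matrix (Fin n) (Fin n) ℝ) (a b c : Fin (n + 4)) (x : Pt n) : ℝ :=
  (1 / 2) * ∑ d : Fin (n + 4), (Gmet A x)⁻¹ a d *
    (pd b (fun y => Gmet A y d c) x + pd c (fun y => Gmet A y b d) x
      - pd d (fun y => Gmet A y b c) x)

/-- Curvature components
`R^a_{b,c,d} = ∂_c Γ^a_{db} − ∂_d Γ^a_{cb} + Σ_e (Γ^a_{ce} Γ^e_{db} − Γ^a_{de} Γ^e_{cb})`. -/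
def Rcurv (A : Fin N → Matrix (Fin n) (Fin n) ℝ) (a b c d : Fin (n + 4)) (x : Pt n) : ℝ :=
  pd c (Γchr A a d b) x - pd d (Γchr A a c b) x
  + ∑ e : Fin (n + 4), (Γchr A a c e x * Γchr A e d b x - Γchr A a d e x * Γchr A e c b x)

/-- Auxiliary recursion for iterated covariant derivatives of the curvature; the list of
differentiation indices is stored in *reverse* order (most recent derivative first). -/
def covRAux (A : Fin N → Matrix (Fin n) (Fin n) ℝ) :
    Fin (n + 4) → Fin (n + 4) → Fin (n + 4) → Fin (n + 4) → List (Fin (n + 4)) → Pt n → ℝ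
  | a, b, c, d, [], x => Rcurv A a b c d x
  | a, b, c, d, f :: fs, x =>
      pd f (covRAux A a b c d fs) x
      + ∑ l : Fin (n + 4), Γchr A a f l x * covRAux A l b c d fs x
      - ∑ l : Fin (n + 4), Γchr A l f b x * covRAux A a l c d fs x
      - ∑ l : Fin (n + 4), Γchr A l f c x * covRAux A a b l d fs x
      - ∑ l : Fin (n + 4), Γchr A l f d x * covRAux A a b c l fs x
      - ∑ s : Fin fs.length, ∑ l : Fin (n + 4),
          Γchr A l f (fs.get s) x * covRAux A a b c d (fs.set s l) x
  termination_by a b c d fs => fs.length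
  decreasing_by all_goals simp [List.length_set]

/-- `covR A a b c d [f_1, …, f_r] x` is the component `R^a_{b,c,d;f_1;…;f_r}(x)` of the
`r`-th covariant derivative of the curvature tensor (indices in natural order). -/
def covR (A : Fin N → Matrix (Fin n) (Fin n) ℝ) (a b c d : Fin (n + 4))
    (fs : List (Fin (n + 4))) (x : Pt n) : ℝ :=
  covRAux A a b c d fs.reverse x




section Shift
variable {E F : Type*} [NormedAddCommGroup E] [NormedSpace ℝ E]
  [NormedAddCommGroup F] [NormedSpace ℝ F]

lemma differentiableAt_shift {f : E → F} {x c : E}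
    (h : DifferentiableAt ℝ f (x + c)) :
    DifferentiableAt ℝ (fun y => f (y + c)) x :=
  h.comp x (differentiableAt_id.add_const c)

lemma fderiv_shift (f : E → F) (x c : E) :
    fderiv ℝ (fun y => f (y + c)) x = fderiv ℝ f (x + c) := by
  by_cases h : DifferentiableAt ℝ f (x + c)
  · have := (h.hasFDerivAt.comp x ((hasFDerivAt_id x).add_const c)).fderiv
    simpa [Function.comp_def] using this
  · rw [fderiv_zero_of_not_differentiableAt h, fderiv_zero_of_not_differentiableAt]
    intro h'
    apply h
    have h2 : DifferentiableAt ℝ (fun z => (fun y => f (y + c)) (z + -c)) (x + c) :=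
      differentiableAt_shift (f := fun y => f (y + c)) (x := x + c) (c := -c)
        (by simpa using h')
    simpa using h2

end Shift

def shiftv (n : ℕ) (s t : ℝ) : Pt n :=
  s • (Pi.single (p1 n) 1 : Pt n) + t • (Pi.single (p2 n) 1 : Pt n)

def Indep (g : Pt n → ℝ) : Prop :=
  ∀ (x : Pt n) (s t : ℝ), g (x + shiftv n s t) = g x

theorem indep_pd {g : Pt n → ℝ} (hg : Indep g) (b : Fin (n + 4)) : Indep (pd b g) := by
  intro x s t
  have hfun : (fun y => g (y + shiftv n s t)) = g := funext fun y => hg y s t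
  unfold pd
  rw [← fderiv_shift g x (shiftv n s t), hfun]

theorem pd_dir_zero {g : Pt n → ℝ} (e : Fin (n + 4))
    (h0 : ∀ (x : Pt n) (s : ℝ), g (x + s • (Pi.single e 1 : Pt n)) = g x) (x : Pt n) :
    pd e g x = 0 := by
  by_cases h : DifferentiableAt ℝ g x
  · have hline : HasDerivAt (fun s : ℝ => x + s • (Pi.single e 1 : Pt n))
        (Pi.single e 1) 0 := by
      have h1 : HasDerivAt (fun s : ℝ => s • (Pi.single e 1 : Pt n))
          ((1 : ℝ) • (Pi.single e 1 : Pt n)) 0 := (hasDerivAt_id (0 : ℝ)).smul_const _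
      simpa using h1.const_add x
    have hg' : HasFDerivAt g (fderiv ℝ g x) (x + (0 : ℝ) • (Pi.single e 1 : Pt n)) := by
      simpa using h.hasFDerivAt
    have h2 : HasDerivAt (fun s : ℝ => g (x + s • (Pi.single e 1 : Pt n)))
        (fderiv ℝ g x (Pi.single e 1)) 0 := by
      have := hg'.comp_hasDerivAt 0 hline
      simpa [Function.comp_def] using this
    have hconst : (fun s : ℝ => g (x + s • (Pi.single e 1 : Pt n))) = fun _ => g x :=
      funext fun s => h0 x s
    rw [hconst] at h2
    have := (hasDerivAt_const (0 : ℝ) (g x)).unique h2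
    simpa [pd] using this.symm
  · simp [pd, fderiv_zero_of_not_differentiableAt h]

theorem indep_pd_p1 {g : Pt n → ℝ} (hg : Indep g) (x : Pt n) : pd (p1 n) g x = 0 := by
  refine pd_dir_zero _ (fun x s => ?_) x
  have := hg x s 0
  simpa [shiftv] using this

theorem indep_pd_p2 {g : Pt n → ℝ} (hg : Indep g) (x : Pt n) : pd (p2 n) g x = 0 := by
  refine pd_dir_zero _ (fun x t => ?_) x
  have := hg x 0 t
  simpa [shiftv] using this


lemma shift_apply_ne (x : Pt n) (s t : ℝ) (a : Fin (n + 4))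
    (h1 : a ≠ p1 n) (h2 : a ≠ p2 n) : (x + shiftv n s t) a = x a := by
  simp [shiftv, Pi.single_apply, h1, h2]

lemma ehat_ne_p1 (i : Fin n) : ehat i ≠ p1 n := by
  simp [ehat, p1, Fin.ext_iff]

lemma ehat_ne_p2 (i : Fin n) : ehat i ≠ p2 n := by
  simp [ehat, p2, Fin.ext_iff]

lemma q1_ne_p1 : q1 n ≠ p1 n := by simp [q1, p1, Fin.ext_iff]
lemma q1_ne_p2 : q1 n ≠ p2 n := by simp [q1, p2, Fin.ext_iff]
lemma q2_ne_p1 : q2 n ≠ p1 n := by simp [q2, p1, Fin.ext_iff]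
lemma q2_ne_p2 : q2 n ≠ p2 n := by simp [q2, p2, Fin.ext_iff]
lemma p1_ne_p2 : p1 n ≠ p2 n := by simp [p1, p2, Fin.ext_iff]
lemma p1_ne_q1 : p1 n ≠ q1 n := by simp [p1, q1, Fin.ext_iff]
lemma p1_ne_q2 : p1 n ≠ q2 n := by simp [p1, q2, Fin.ext_iff]
lemma p1_ne_ehat (i : Fin n) : p1 n ≠ ehat i := (ehat_ne_p1 i).symm
lemma p2_ne_q1 : p2 n ≠ q1 n := by simp [p2, q1, Fin.ext_iff]
lemma p2_ne_q2 : p2 n ≠ q2 n := by simp [p2, q2, Fin.ext_iff]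
lemma p2_ne_ehat (i : Fin n) : p2 n ≠ ehat i := (ehat_ne_p2 i).symm

variable (A : Fin N → Matrix (Fin n) (Fin n) ℝ)

lemma u_shift (i : Fin n) (x : Pt n) (s t : ℝ) :
    u A i (x + shiftv n s t) = u A i x := by
  unfold u
  refine Finset.sum_congr rfl fun j _ => Finset.sum_congr rfl fun α _ => ?_
  rw [shift_apply_ne x s t _ (ehat_ne_p1 j) (ehat_ne_p2 j),
    shift_apply_ne x s t _ q1_ne_p1 q1_ne_p2]

lemma Fq_shift (x : Pt n) (s t : ℝ) : Fq n (x + shiftv n s t) = Fq n x := by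
  unfold Fq
  refine Finset.sum_congr rfl fun i _ => ?_
  rw [shift_apply_ne x s t _ (ehat_ne_p1 i) (ehat_ne_p2 i)]

lemma Gmet_shift (x : Pt n) (s t : ℝ) :
    Gmet A (x + shiftv n s t) = Gmet A x := by
  funext a b
  simp only [Gmet, u_shift, Fq_shift]

lemma indep_Gmet (a b : Fin (n + 4)) : Indep (fun y => Gmet A y a b) :=
  fun x s t => congrFun (congrFun (Gmet_shift A x s t) a) b

lemma indep_Γ (a b c : Fin (n + 4)) : Indep (Γchr A a b c) := by
  intro x s t
  unfold Γchr
  rw [Gmet_shift]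
  refine congrArg _ (Finset.sum_congr rfl fun d _ => ?_)
  rw [indep_pd (indep_Gmet A d c) b x s t, indep_pd (indep_Gmet A b d) c x s t,
    indep_pd (indep_Gmet A b c) d x s t]

lemma indep_R (a b c d : Fin (n + 4)) : Indep (Rcurv A a b c d) := by
  intro x s t
  unfold Rcurv
  rw [indep_pd (indep_Γ A a d b) c x s t, indep_pd (indep_Γ A a c b) d x s t]
  refine congrArg _ (Finset.sum_congr rfl fun e _ => ?_)
  rw [indep_Γ A a c e x s t, indep_Γ A e d b x s t, indep_Γ A a d e x s t,
    indep_Γ A e c b x s t]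

lemma indep_covRAux : ∀ (m : ℕ) (fs : List (Fin (n + 4))), fs.length = m →
    ∀ a b c d, Indep (covRAux A a b c d fs) := by
  intro m
  induction m with
  | zero =>
    intro fs hfs a b c d
    rw [List.length_eq_zero_iff] at hfs
    subst hfs
    intro x s t
    simp only [covRAux]
    exact indep_R A a b c d x s t
  | succ m IH =>
    intro fs hfs a b c d
    match fs, hfs with
    | f :: fs', hfs =>
      have hlen : fs'.length = m := by simpa using hfs
      intro x s t
      have hΓ : ∀ (a b c : Fin (n + 4)),
          Γchr A a b c (x + shiftv n s t) = Γchr A a b c x :=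
        fun a b c => indep_Γ A a b c x s t
      have hC : ∀ (a b c d : Fin (n + 4)),
          covRAux A a b c d fs' (x + shiftv n s t) = covRAux A a b c d fs' x :=
        fun a b c d => IH fs' hlen a b c d x s t
      have hCset : ∀ (sx : Fin fs'.length) (l a b c d : Fin (n + 4)),
          covRAux A a b c d (fs'.set sx l) (x + shiftv n s t)
            = covRAux A a b c d (fs'.set sx l) x :=
        fun sx l a b c d => IH _ (by simp [hlen]) a b c d x s t
      have hpd : ∀ (a b c d : Fin (n + 4)),
          pd f (covRAux A a b c d fs') (x + shiftv n s t)
            = pd f (covRAux A a b c d fs') x :=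
        fun a b c d => indep_pd (fun y u v => IH fs' hlen a b c d y u v) f x s t
      simp only [covRAux, hΓ, hC, hCset, hpd]

lemma Gmet_p1_row (y : Pt n) (d : Fin (n + 4)) :
    Gmet A y (p1 n) d = if d = q1 n then 1 else 0 := by
  simp [Gmet, p1_ne_p2, p1_ne_q1, p1_ne_q2, p1_ne_ehat]

lemma Gmet_p2_row (y : Pt n) (d : Fin (n + 4)) :
    Gmet A y (p2 n) d = if d = q2 n then 1 else 0 := by
  simp [Gmet, p1_ne_p2.symm, p2_ne_q1, p2_ne_q2, p2_ne_ehat]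

lemma Γ_p1_zero (a c : Fin (n + 4)) (x : Pt n) : Γchr A a (p1 n) c x = 0 := by
  unfold Γchr
  have h1 : ∀ d : Fin (n + 4), pd (p1 n) (fun y => Gmet A y d c) x = 0 :=
    fun d => indep_pd_p1 (indep_Gmet A d c) x
  have h2 : ∀ b d : Fin (n + 4), pd b (fun y => Gmet A y (p1 n) d) x = 0 := by
    intro b d
    have : (fun y : Pt n => Gmet A y (p1 n) d) = fun _ => if d = q1 n then 1 else 0 :=
      funext fun y => Gmet_p1_row A y d
    rw [this]
    simp [pd]
  simp [h1, h2]

lemma Γ_p2_zero (a c : Fin (n + 4)) (x : Pt n) : Γchr A a (p2 n) c x = 0 := by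
  unfold Γchr
  have h1 : ∀ d : Fin (n + 4), pd (p2 n) (fun y => Gmet A y d c) x = 0 :=
    fun d => indep_pd_p2 (indep_Gmet A d c) x
  have h2 : ∀ b d : Fin (n + 4), pd b (fun y => Gmet A y (p2 n) d) x = 0 := by
    intro b d
    have : (fun y : Pt n => Gmet A y (p2 n) d) = fun _ => if d = q2 n then 1 else 0 :=
      funext fun y => Gmet_p2_row A y d
    rw [this]
    simp [pd]
  simp [h1, h2]

lemma covRAux_p1 (fs : List (Fin (n + 4))) (a b c d : Fin (n + 4)) (x : Pt n) :
    covRAux A a b c d (p1 n :: fs) x = 0 := by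
  simp only [covRAux]
  rw [indep_pd_p1 (fun y u v => indep_covRAux A fs.length fs rfl a b c d y u v) x]
  simp [Γ_p1_zero]

lemma covRAux_p2 (fs : List (Fin (n + 4))) (a b c d : Fin (n + 4)) (x : Pt n) :
    covRAux A a b c d (p2 n :: fs) x = 0 := by
  simp only [covRAux]
  rw [indep_pd_p2 (fun y u v => indep_covRAux A fs.length fs rfl a b c d y u v) x]
  simp [Γ_p2_zero]


/-- `R^î_{ĵ,c,d;f_1;…;f_r;1} = 0` and `R^î_{ĵ,c,d;f_1;…;f_r;2} = 0`. -/
theorem statement10 (n N : ℕ) (hn : 1 ≤ n) (hN : 1 ≤ N)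
    (A : Fin N → Matrix (Fin n) (Fin n) ℝ) (hA : ∀ α, (A α)ᵀ = -A α) :
    ∀ (fs : List (Fin (n + 4))) (c d : Fin (n + 4)) (i j : Fin n) (x : Pt n),
      covR A (ehat i) (ehat j) c d (fs ++ [p1 n]) x = 0 ∧
      covR A (ehat i) (ehat j) c d (fs ++ [p2 n]) x = 0 := by
  intro fs c d i j x
  constructor
  · rw [covR, List.reverse_append]
    exact covRAux_p1 A _ _ _ _ _ _
  · rw [covR, List.reverse_append]
    exact covRAux_p2 A _ _ _ _ _ _

end
end HolPaper
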